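/- arXiv:2208.10619 — 4 statements merged into one kernel-verified Lean document; each statement's English description precedes it below -/
import Mathlib

section
/- If (X,d) is a q-hyperconvex quasi-metric space, then its symmetrization (X, d^s), where d^s = max(d, d⁻¹), is a hyperconvex metric space. -/
universe u

structure QuasiMetric (X : Type u) where
  d : X → X → ℝ
  nonneg : ∀ x y, 0 ≤ d x y
  eq_iff : ∀ x y, (d x y = 0 ∧ d y x = 0) ↔ x = y
  triangle : ∀ x y z, d x y ≤ d x z + d z y

def QHyperconvex {X : Type u} (d : X → X → ℝ) : Prop :=
  ∀ {I : Type u} (x : I → X) (r s : I → ℝ),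
    (∀ i, 0 ≤ r i) → (∀ i, 0 ≤ s i) →
    (∀ i j, d (x i) (x j) ≤ r i + s j) →
    ∃ z, ∀ i, d (x i) z ≤ r i ∧ d z (x i) ≤ s i

/-- Hyperconvexity of a (symmetric) metric, expressed for a distance function. -/
def Hyperconvex {X : Type u} (d : X → X → ℝ) : Prop :=
  ∀ {I : Type u} (x : I → X) (r : I → ℝ),
    (∀ i, 0 ≤ r i) →
    (∀ i j, d (x i) (x j) ≤ r i + r j) →
    ∃ z, ∀ i, d (x i) z ≤ r i

/-- If `(X,d)` is q-hyperconvex, its symmetrisation `(X, dˢ)` is hyperconvex. -/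
theorem symmetrization_hyperconvex {X : Type u} (q : QuasiMetric X)
    (hq : QHyperconvex q.d) :
    Hyperconvex (fun x y => max (q.d x y) (q.d y x)) := by
  intro I x r hr hd
  obtain ⟨z, hz⟩ := hq x r r hr hr (fun i j =>
    le_trans (le_max_left _ _) (hd i j))
  exact ⟨z, fun i => max_le (hz i).1 (hz i).2⟩
end

section
/- If (X,d_X) and (Y,d_Y) are q-hyperconvex quasi-metric spaces, then the product X × Y with the sup quasi-metric d((x,y),(x',y')) = max(d_X(x,x'), d_Y(y,y')) is q-hyperconvex. -/
universe u

/-- The product of two q-hyperconvex spaces with the sup quasi-metric is q-hyperconvex. -/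
theorem product_qHyperconvex {X Y : Type u} (qX : QuasiMetric X) (qY : QuasiMetric Y)
    (hX : QHyperconvex qX.d) (hY : QHyperconvex qY.d) :
    QHyperconvex (fun (p p' : X × Y) => max (qX.d p.1 p'.1) (qY.d p.2 p'.2)) := by
  intro I x r s hr hs h
  obtain ⟨zX, hzX⟩ := hX (fun i => (x i).1) r s hr hs
    (fun i j => le_trans (le_max_left _ _) (h i j))
  obtain ⟨zY, hzY⟩ := hY (fun i => (x i).2) r s hr hs
    (fun i j => le_trans (le_max_right _ _) (h i j))
  exact ⟨(zX, zY), fun i => ⟨max_le (hzX i).1 (hzY i).1, max_le (hzX i).2 (hzY i).2⟩⟩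
end

section
/- The real line ℝ with the quasi-metric u(x,y) = max(x − y, 0) is a q-hyperconvex quasi-metric space. -/
universe u

/-- `(ℝ, u)` with `u x y = max (x - y) 0` is q-hyperconvex. -/
theorem real_u_qHyperconvex :
    QHyperconvex (fun x y : ℝ => max (x - y) 0) := by
  intro I x r s hr hs hd
  by_cases hI : Nonempty I
  · obtain ⟨i₀⟩ := hI
    set S : Set ℝ := Set.range (fun i => x i - r i) with hS
    have hSne : S.Nonempty := ⟨x i₀ - r i₀, ⟨i₀, rfl⟩⟩
    have hbdd : BddAbove S := by
      refine ⟨x i₀ + s i₀, ?_⟩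
      rintro _ ⟨i, rfl⟩
      have := hd i i₀
      simp only [le_max_iff, max_le_iff] at this ⊢
      linarith [this.1]
    refine ⟨sSup S, fun i => ?_⟩
    have h1 : x i - r i ≤ sSup S := le_csSup hbdd ⟨i, rfl⟩
    have h2 : sSup S ≤ x i + s i := by
      apply csSup_le hSne
      rintro _ ⟨j, rfl⟩
      have := hd j i
      simp only [max_le_iff] at this ⊢
      linarith [this.1]
    constructor
    · simp only [max_le_iff]
      exact ⟨by linarith, hr i⟩
    · simp only [max_le_iff]
      exact ⟨by linarith, hs i⟩
  · exact ⟨0, fun i => absurd ⟨i⟩ hI⟩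
end

section
/- Let (X,d) be a δ-Sym-coarsely injective quasi-metric space and f = (f_1,f_2) ∈ Q(X). Then there exists z ∈ X such that for all x ∈ X, |d(x,z) − f_2(x)| ≤ δ and |d(z,x) − f_1(x)| ≤ δ; in particular, the canonical image of X is δ-Sym-large in Q(X) with respect to the symmetrized sup-distance D^s(f,g) = max(‖f_1 − g_1‖_∞, ‖f_2 − g_2‖_∞). -/
universe u

/-- `(X,d)` is `δ`-Sym-coarsely injective. -/
def SymCoarselyInjective {X : Type u} (d : X → X → ℝ) (δ : ℝ) : Prop :=
  ∀ {I : Type u} (x : I → X) (r s : I → ℝ),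
    (∀ i, 0 ≤ r i) → (∀ i, 0 ≤ s i) →
    (∀ i j, d (x i) (x j) ≤ r i + s j) →
    ∃ z, ∀ i, d (x i) z ≤ r i + δ ∧ d z (x i) ≤ s i + δ

/-- If `X` is `δ`-Sym-coarsely injective and `f = (f₁,f₂) ∈ Q(X)` is a minimal
ample pair, then there is `z ∈ X` with `|d(x,z) - f₂ x| ≤ δ` and
`|d(z,x) - f₁ x| ≤ δ` for all `x`; i.e. `X` is `δ`-Sym-large in `Q(X)`. -/
theorem symCoarselyInjective_large_in_hull {X : Type u} (q : QuasiMetric X)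
    (δ : ℝ) (hδ : 0 ≤ δ) (hinj : SymCoarselyInjective q.d δ)
    (f₁ f₂ : X → ℝ)
    (hnn₁ : ∀ x, 0 ≤ f₁ x) (hnn₂ : ∀ x, 0 ≤ f₂ x)
    (hample : ∀ x y, q.d x y ≤ f₂ x + f₁ y)
    (hmin₁ : ∀ x, IsLUB {t | ∃ y, t = max (q.d y x - f₂ y) 0} (f₁ x))
    (hmin₂ : ∀ x, IsLUB {t | ∃ y, t = max (q.d x y - f₁ y) 0} (f₂ x)) :
    ∃ z : X, ∀ x : X, |q.d x z - f₂ x| ≤ δ ∧ |q.d z x - f₁ x| ≤ δ := by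
  obtain ⟨z, hz⟩ := hinj id f₂ f₁ hnn₂ hnn₁ (fun i j => hample i j)
  refine ⟨z, fun x => ?_⟩
  obtain ⟨h1, h2⟩ := hz x
  simp only [id] at h1 h2
  have hub₂ : f₂ x ≤ q.d x z + δ := by
    apply (hmin₂ x).2
    rintro t ⟨y, rfl⟩
    apply max_le _ (by have := q.nonneg x z; linarith)
    have := q.triangle x y z
    have := (hz y).2
    simp only [id] at this
    linarith
  have hub₁ : f₁ x ≤ q.d z x + δ := by
    apply (hmin₁ x).2
    rintro t ⟨y, rfl⟩
    apply max_le _ (by have := q.nonneg z x; linarith)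
    have := q.triangle y x z
    have := (hz y).1
    simp only [id] at this
    linarith
  constructor <;> rw [abs_le] <;> constructor <;> linarith
end
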